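/- Let α be a finite type and let σ be a permutation of α that is a 3-cycle (a cycle of length 3). Then the number of ordered pairs (τ₁, τ₂) of transpositions of α satisfying τ₁ ∘ τ₂ = σ is exactly 3. -/
import Mathlib

open Equiv

private lemma swap_eq_of_apply' {α : Type*} [DecidableEq α] {u v x y : α}
    (hxy : x ≠ y) (h : Equiv.swap u v x = y) : Equiv.swap u v = Equiv.swap x y := by
  have hx : Equiv.swap u v x ≠ x := h ▸ hxy.symm
  rcases Equiv.swap_apply_ne_self_iff.mp hx with ⟨huv, hx'⟩
  rcases hx' with rfl | rfl
  · rw [Equiv.swap_apply_left] at h; subst h; rfl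
  · rw [Equiv.swap_apply_right] at h; subst h; exact Equiv.swap_comm _ _

/-- A 3-cycle in a finite permutation group can be written as an ordered product
of two transpositions in exactly 3 ways. -/
theorem card_pairs_of_transpositions_eq_threeCycle
    (α : Type*) [Fintype α] [DecidableEq α]
    (σ : Equiv.Perm α) (hσ : σ.IsThreeCycle) :
    Nat.card {p : Equiv.Perm α × Equiv.Perm α //
      p.1.IsSwap ∧ p.2.IsSwap ∧ p.1 * p.2 = σ} = 3 := by
  have hcard : σ.support.card = 3 := hσ.card_support
  have hne : σ.support.Nonempty := Finset.card_pos.mp (by omega)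
  obtain ⟨a, ha⟩ := hne
  obtain ⟨b, hb⟩ : ∃ b, σ a = b := ⟨σ a, rfl⟩
  obtain ⟨c, hc⟩ : ∃ c, σ b = c := ⟨σ b, rfl⟩
  have hσa : σ a ≠ a := Equiv.Perm.mem_support.mp ha
  have hab : a ≠ b := fun h => hσa (hb.trans h.symm)
  have hbmem : b ∈ σ.support := by
    rw [← hb]; exact Equiv.Perm.apply_mem_support.mpr ha
  have hbc : b ≠ c := fun h => (Equiv.Perm.mem_support.mp hbmem) (hc.trans h.symm)
  have h3 : σ ^ 3 = 1 := by rw [← hσ.orderOf]; exact pow_orderOf_eq_one σ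
  have hca : σ c = a := by
    have h' : (σ ^ 3) a = a := by rw [h3]; rfl
    calc σ c = σ (σ (σ a)) := by rw [hb, hc]
    _ = (σ ^ 3) a := by simp [pow_succ, Equiv.Perm.mul_apply]
    _ = a := h'
  have hac : a ≠ c := by
    intro h
    rw [← h] at hca
    exact hσa hca
  have hcmem : c ∈ σ.support := Equiv.Perm.mem_support.mpr (by rw [hca]; exact hac)
  have supp_eq : σ.support = {a, b, c} := by
    have hsub : ({a, b, c} : Finset α) ⊆ σ.support := by
      intro x hx
      simp only [Finset.mem_insert, Finset.mem_singleton] at hx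
      rcases hx with rfl | rfl | rfl
      · exact ha
      · exact hbmem
      · exact hcmem
    have hcard3 : ({a, b, c} : Finset α).card = 3 :=
      Finset.card_eq_three.mpr ⟨a, b, c, hab, hac, hbc, rfl⟩
    exact (Finset.eq_of_subset_of_card_le hsub (by rw [hcard3, hcard])).symm
  have hfix : ∀ x, x ≠ a → x ≠ b → x ≠ c → σ x = x := by
    intro x hxa hxb hxc
    have : x ∉ σ.support := by
      rw [supp_eq]; simp [hxa, hxb, hxc]
    exact Equiv.Perm.notMem_support.mp this
  -- three decompositions
  have hd1 : σ = swap a b * swap b c := by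
    ext x
    rcases eq_or_ne x a with rfl | hxa
    · rw [Equiv.Perm.mul_apply, swap_apply_of_ne_of_ne hab hac, swap_apply_left]
      exact hb
    rcases eq_or_ne x b with rfl | hxb
    · rw [Equiv.Perm.mul_apply, swap_apply_left,
        swap_apply_of_ne_of_ne hac.symm hbc.symm]
      exact hc
    rcases eq_or_ne x c with rfl | hxc
    · rw [Equiv.Perm.mul_apply, swap_apply_right, swap_apply_right]
      exact hca
    · rw [Equiv.Perm.mul_apply, swap_apply_of_ne_of_ne hxb hxc,
        swap_apply_of_ne_of_ne hxa hxb]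
      exact hfix x hxa hxb hxc
  have hd2 : σ = swap b c * swap c a := by
    ext x
    rcases eq_or_ne x a with rfl | hxa
    · rw [Equiv.Perm.mul_apply, swap_apply_right, swap_apply_right]
      exact hb
    rcases eq_or_ne x b with rfl | hxb
    · rw [Equiv.Perm.mul_apply, swap_apply_of_ne_of_ne hbc hab.symm, swap_apply_left]
      exact hc
    rcases eq_or_ne x c with rfl | hxc
    · rw [Equiv.Perm.mul_apply, swap_apply_left, swap_apply_of_ne_of_ne hab hac]
      exact hca
    · rw [Equiv.Perm.mul_apply, swap_apply_of_ne_of_ne hxc hxa,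
        swap_apply_of_ne_of_ne hxb hxc]
      exact hfix x hxa hxb hxc
  have hd3 : σ = swap c a * swap a b := by
    ext x
    rcases eq_or_ne x a with rfl | hxa
    · rw [Equiv.Perm.mul_apply, swap_apply_left, swap_apply_of_ne_of_ne hbc hab.symm]
      exact hb
    rcases eq_or_ne x b with rfl | hxb
    · rw [Equiv.Perm.mul_apply, swap_apply_right, swap_apply_right]
      exact hc
    rcases eq_or_ne x c with rfl | hxc
    · rw [Equiv.Perm.mul_apply, swap_apply_of_ne_of_ne hac.symm hbc.symm,
        swap_apply_left]
      exact hca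
    · rw [Equiv.Perm.mul_apply, swap_apply_of_ne_of_ne hxa hxb,
        swap_apply_of_ne_of_ne hxc hxa]
      exact hfix x hxa hxb hxc
  have hσne1 : σ ≠ 1 := by
    intro h
    rw [h] at hcard
    simp at hcard
  -- set equality
  have key : {p : Equiv.Perm α × Equiv.Perm α | p.1.IsSwap ∧ p.2.IsSwap ∧ p.1 * p.2 = σ}
      = {(swap a b, swap b c), (swap b c, swap c a), (swap c a, swap a b)} := by
    ext p
    obtain ⟨τ₁, τ₂⟩ := p
    simp only [Set.mem_setOf_eq, Set.mem_insert_iff, Set.mem_singleton_iff, Prod.mk.injEq]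
    constructor
    · rintro ⟨h1, ⟨x, y, hxy, rfl⟩, hmul⟩
      obtain ⟨u, v, huv, hτ₁uv⟩ := h1
      have hτ : τ₁ = σ * swap x y := by
        rw [← hmul, mul_assoc, swap_mul_self, mul_one]
      have hsx : σ x ≠ x := by
        intro hfx
        have h1y : τ₁ y = x := by
          have h' : τ₁ (swap x y x) = σ x := by rw [← Equiv.Perm.mul_apply, hmul]
          rwa [swap_apply_left, hfx] at h'
        rw [hτ₁uv] at h1y
        have heq : swap u v = swap y x := swap_eq_of_apply' hxy.symm h1y
        apply hσne1
        rw [← hmul, hτ₁uv, heq, swap_comm y x, swap_mul_self]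
      have hsy : σ y ≠ y := by
        intro hfy
        have h1x : τ₁ x = y := by
          have h' : τ₁ (swap x y y) = σ y := by rw [← Equiv.Perm.mul_apply, hmul]
          rwa [swap_apply_right, hfy] at h'
        rw [hτ₁uv] at h1x
        have heq : swap u v = swap x y := swap_eq_of_apply' hxy h1x
        apply hσne1
        rw [← hmul, hτ₁uv, heq, swap_mul_self]
      have hxmem : x ∈ ({a, b, c} : Finset α) := by
        rw [← supp_eq]; exact Equiv.Perm.mem_support.mpr hsx
      have hymem : y ∈ ({a, b, c} : Finset α) := by
        rw [← supp_eq]; exact Equiv.Perm.mem_support.mpr hsy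
      simp only [Finset.mem_insert, Finset.mem_singleton] at hxmem hymem
      rcases hxmem with hx | hx | hx <;> rcases hymem with hy | hy | hy
      · exact absurd (hx.trans hy.symm) hxy
      · -- x = a, y = b
        right; right
        refine ⟨?_, ?_⟩
        · rw [hτ, hx, hy, hd3, mul_assoc, swap_mul_self, mul_one]
        · rw [hx, hy]
      · -- x = a, y = c
        right; left
        refine ⟨?_, ?_⟩
        · rw [hτ, hx, hy, swap_comm a c, hd2, mul_assoc, swap_mul_self, mul_one]
        · rw [hx, hy, swap_comm]
      · -- x = b, y = a
        right; right
        refine ⟨?_, ?_⟩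
        · rw [hτ, hx, hy, swap_comm b a, hd3, mul_assoc, swap_mul_self, mul_one]
        · rw [hx, hy, swap_comm]
      · exact absurd (hx.trans hy.symm) hxy
      · -- x = b, y = c
        left
        refine ⟨?_, ?_⟩
        · rw [hτ, hx, hy, hd1, mul_assoc, swap_mul_self, mul_one]
        · rw [hx, hy]
      · -- x = c, y = a
        right; left
        refine ⟨?_, ?_⟩
        · rw [hτ, hx, hy, hd2, mul_assoc, swap_mul_self, mul_one]
        · rw [hx, hy]
      · -- x = c, y = b
        left
        refine ⟨?_, ?_⟩
        · rw [hτ, hx, hy, swap_comm c b, hd1, mul_assoc, swap_mul_self, mul_one]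
        · rw [hx, hy, swap_comm]
      · exact absurd (hx.trans hy.symm) hxy
    · rintro (⟨rfl, rfl⟩ | ⟨rfl, rfl⟩ | ⟨rfl, rfl⟩)
      · exact ⟨⟨a, b, hab, rfl⟩, ⟨b, c, hbc, rfl⟩, hd1.symm⟩
      · exact ⟨⟨b, c, hbc, rfl⟩, ⟨c, a, hac.symm, rfl⟩, hd2.symm⟩
      · exact ⟨⟨c, a, hac.symm, rfl⟩, ⟨a, b, hab, rfl⟩, hd3.symm⟩
  -- distinctness of the three swaps
  have n12 : swap a b ≠ swap b c := by
    intro h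
    have h' := DFunLike.congr_fun h a
    rw [swap_apply_left, swap_apply_of_ne_of_ne hab hac] at h'
    exact hab h'.symm
  have n13 : swap a b ≠ swap c a := by
    intro h
    have h' := DFunLike.congr_fun h b
    rw [swap_apply_right, swap_apply_of_ne_of_ne hbc hab.symm] at h'
    exact hab h'
  have n23 : swap b c ≠ swap c a := by
    intro h
    have h' := DFunLike.congr_fun h b
    rw [swap_apply_left, swap_apply_of_ne_of_ne hbc hab.symm] at h'
    exact hbc h'.symm
  have hcoe : Nat.card {p : Equiv.Perm α × Equiv.Perm α //
      p.1.IsSwap ∧ p.2.IsSwap ∧ p.1 * p.2 = σ}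
      = ({(swap a b, swap b c), (swap b c, swap c a), (swap c a, swap a b)} :
        Set (Equiv.Perm α × Equiv.Perm α)).ncard := by
    rw [← Nat.card_coe_set_eq, ← key]
    rfl
  rw [hcoe]
  rw [Set.ncard_insert_of_notMem (by simp [Prod.ext_iff, n12, n13]),
    Set.ncard_insert_of_notMem (by simp [Prod.ext_iff, n23]),
    Set.ncard_singleton]
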